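/- Let R be a commutative ring that is P-coherent and has Krull dimension 0 (every prime ideal is maximal). Let X be the set of maximal ideals P with PR_P = 0 and let A be the kernel of the natural map R → ∏_{P∈X} R_P. Then A is a pure ideal of R and X = V(A). -/

import Mathlib

universe u v

/-- `N` is a pure submodule of `M`: every finite system of linear equations with
constant terms in `N` which is solvable in `M` is solvable in `N`
(equivalently, `- ⊗ N → - ⊗ M` stays injective). -/
def IsPureSubmodule (R : Type u) [Ring R] {M : Type v} [AddCommGroup M] [Module R M]
    (N : Submodule R M) : Prop :=
  ∀ (k l : ℕ) (a : Fin k → Fin l → R) (e : Fin k → N),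
    (∃ x : Fin l → M, ∀ i, ∑ j, a i j • x j = (e i : M)) →
    ∃ y : Fin l → N, ∀ i, ∑ j, a i j • (y j : M) = (e i : M)

/-- `N` is an RD-pure (relatively divisible) submodule of `M`: `rM ∩ N = rN` for all `r`. -/
def IsRDPureSubmodule (R : Type u) [Ring R] {M : Type v} [AddCommGroup M] [Module R M]
    (N : Submodule R M) : Prop :=
  ∀ (r : R) (n : M), n ∈ N → (∃ m : M, r • m = n) → ∃ n' ∈ N, r • n' = n

/-- `N` is an essential submodule of `M`. -/
def IsEssentialSubmodule (R : Type u) [Ring R] {M : Type v} [AddCommGroup M] [Module R M]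
    (N : Submodule R M) : Prop :=
  ∀ K : Submodule R M, K ⊓ N = ⊥ → K = ⊥

/-- `M` is a pure-essential extension of its submodule `N`. -/
def IsPureEssential (R : Type u) [Ring R] {M : Type v} [AddCommGroup M] [Module R M]
    (N : Submodule R M) : Prop :=
  IsPureSubmodule R N ∧ ∀ K : Submodule R M, K ≠ ⊥ → K ⊓ N = ⊥ →
    ¬ IsPureSubmodule R (N.map K.mkQ)

/-- `M` is an RD-essential extension of its submodule `N`. -/
def IsRDEssential (R : Type u) [Ring R] {M : Type v} [AddCommGroup M] [Module R M]
    (N : Submodule R M) : Prop :=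
  IsRDPureSubmodule R N ∧ ∀ K : Submodule R M, K ≠ ⊥ → K ⊓ N = ⊥ →
    ¬ IsRDPureSubmodule R (N.map K.mkQ)

/-- `M` is pure-injective: injective relative to pure monomorphisms. -/
def IsPureInjective (R : Type u) [Ring R] (M : Type v) [AddCommGroup M] [Module R M] : Prop :=
  ∀ (A B : Type v) [AddCommGroup A] [Module R A] [AddCommGroup B] [Module R B]
    (f : A →ₗ[R] B), Function.Injective f → IsPureSubmodule R (LinearMap.range f) →
    ∀ g : A →ₗ[R] M, ∃ h : B →ₗ[R] M, h ∘ₗ f = g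

/-- `M` is RD-injective: injective relative to RD-pure monomorphisms. -/
def IsRDInjective (R : Type u) [Ring R] (M : Type v) [AddCommGroup M] [Module R M] : Prop :=
  ∀ (A B : Type v) [AddCommGroup A] [Module R A] [AddCommGroup B] [Module R B]
    (f : A →ₗ[R] B), Function.Injective f → IsRDPureSubmodule R (LinearMap.range f) →
    ∀ g : A →ₗ[R] M, ∃ h : B →ₗ[R] M, h ∘ₗ f = g

/-- `Ext¹_R(F, M) = 0`, phrased as: every short exact sequence `0 → M → X → F → 0` splits. -/
def Ext1Vanishes (R : Type u) [Ring R] (F : Type v) [AddCommGroup F] [Module R F]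
    (M : Type v) [AddCommGroup M] [Module R M] : Prop :=
  ∀ (X : Type v) [AddCommGroup X] [Module R X] (i : M →ₗ[R] X) (p : X →ₗ[R] F),
    Function.Injective i → Function.Surjective p → LinearMap.ker p = LinearMap.range i →
    ∃ s : X →ₗ[R] M, s ∘ₗ i = LinearMap.id

/-- `M` is FP-injective: `Ext¹(F, M) = 0` for every finitely presented `F`. -/
def IsFPInjective (R : Type u) [Ring R] (M : Type v) [AddCommGroup M] [Module R M] : Prop :=
  ∀ (F : Type v) [AddCommGroup F] [Module R F], Module.FinitePresentation R F →
    Ext1Vanishes R F M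

/-- `M` is P-flat: `Tor₁(R/rR, M) = 0` for every `r`, i.e. `rm = 0` implies
`m ∈ (right annihilator of r) • M`. -/
def IsPFlat (R : Type u) [Ring R] (M : Type v) [AddCommGroup M] [Module R M] : Prop :=
  ∀ (r : R) (m : M), r • m = 0 →
    m ∈ Submodule.span R {x : M | ∃ s : R, ∃ y : M, r * s = 0 ∧ x = s • y}

/-- `M` is a flat left module (equational criterion of flatness, valid over any ring). -/
def IsFlatMod (R : Type u) [Ring R] (M : Type v) [AddCommGroup M] [Module R M] : Prop :=
  ∀ (k : ℕ) (a : Fin k → R) (x : Fin k → M), (∑ i, a i • x i) = 0 →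
    ∃ (l : ℕ) (b : Fin k → Fin l → R) (y : Fin l → M),
      (∀ i, x i = ∑ j, b i j • y j) ∧ ∀ j, (∑ i, a i * b i j) = 0

/-- `M` is semi-compact: every finitely solvable system of congruences
`x ≡ x_α (mod M[I_α])` has a simultaneous solution. -/
def IsSemiCompact (R : Type u) [Ring R] (M : Type v) [AddCommGroup M] [Module R M] : Prop :=
  ∀ (ι : Type v) (x : ι → M) (I : ι → Ideal R),
    (∀ s : Finset ι, ∃ m : M, ∀ i ∈ s, ∀ a ∈ I i, a • (m - x i) = 0) →
    ∃ m : M, ∀ i, ∀ a ∈ I i, a • (m - x i) = 0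

/-!
In a zero-dimensional ring every basic open set `D(c)` of `Spec R` is also closed: if `c ∈ P`,
then `c` is nilpotent in `R_P`, so some `s ∉ P` kills a power of `c`. Hence `V(J)` is clopen for
every finitely generated ideal `J`, i.e. `V(J) = D(e)` for an idempotent `e`.

If a prime `P ⊇ A` were not in `X`, some `c ∈ P` would have `Ann(c) ⊆ P`. By P-coherence
`Ann(c)` is finitely generated, and the idempotent `e` with `D(e) = V(c, Ann(c))` lies outside
`P` but vanishes in `R_Q` for every `Q ∈ X` (there `1 - e ∉ Q`), so `e ∈ A \ P`. Once `V(A) = X`,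
every `a ∈ A` satisfies `A + Ann(a) = R`, i.e. `a = ab` with `b ∈ A`, and this makes `A` pure.
-/

open PrimeSpectrum

section

variable {R : Type*} [CommRing R]

theorem Ideal.IsPrime.exists_notMem_mul_pow_eq_zero [Ring.KrullDimLE 0 R] {P : Ideal R}
    (hP : P.IsPrime) {c : R} (hc : c ∈ P) : ∃ s ∉ P, ∃ n : ℕ, s * c ^ n = 0 := by
  have := Ring.KrullDimLE.of_isLocalization P (Ideal.mem_minimalPrimes_of_krullDimLE_zero P)
    (Localization.AtPrime P)
  obtain ⟨n, hn⟩ := Ring.KrullDimLE.isNilpotent_iff_mem_maximalIdeal.mpr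
    ((IsLocalization.AtPrime.to_map_mem_maximal_iff (Localization.AtPrime P) P c).mpr hc)
  rw [← map_pow, IsLocalization.map_eq_zero_iff P.primeCompl] at hn
  obtain ⟨⟨s, hs⟩, hsc⟩ := hn
  exact ⟨s, hs, n, hsc⟩

theorem PrimeSpectrum.isClopen_basicOpen [Ring.KrullDimLE 0 R] (c : R) :
    IsClopen (basicOpen c : Set (PrimeSpectrum R)) := by
  refine ⟨?_, (basicOpen c).isOpen⟩
  suffices (basicOpen c : Set (PrimeSpectrum R)) = zeroLocus {s | ∃ n : ℕ, s * c ^ n = 0} from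
    this ▸ isClosed_zeroLocus _
  ext ⟨P, hP⟩
  simp only [SetLike.mem_coe, mem_basicOpen, mem_zeroLocus]
  constructor
  · rintro hc s ⟨n, hs⟩
    exact (hP.mem_or_mem (hs ▸ P.zero_mem)).resolve_right (fun h => hc (hP.mem_of_pow_mem n h))
  · intro hann hc
    obtain ⟨s, hs, hsc⟩ := hP.exists_notMem_mul_pow_eq_zero hc
    exact hs (hann hsc)

theorem PrimeSpectrum.isClopen_zeroLocus_of_finite [Ring.KrullDimLE 0 R] {s : Set R}
    (hs : s.Finite) : IsClopen (zeroLocus s) := by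
  rw [← Set.biUnion_of_singleton s, zeroLocus_iUnion₂]
  exact hs.isClopen_biInter fun c _ => by
    simpa [basicOpen_eq_zeroLocus_compl] using (isClopen_basicOpen c).compl

theorem Submodule.fg_annihilator_span_singleton {M : Type*} [AddCommGroup M] [Module R M]
    (x : M) [Module.FinitePresentation R (R ∙ x)] : (R ∙ x).annihilator.FG := by
  let f : R →ₗ[R] R ∙ x := LinearMap.toSpanSingleton R _ ⟨x, mem_span_singleton_self x⟩
  have hf : Function.Surjective f := by
    rintro ⟨y, hy⟩
    obtain ⟨r, rfl⟩ := mem_span_singleton.mp hy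
    exact ⟨r, rfl⟩
  have : LinearMap.ker f = (R ∙ x).annihilator := by
    ext r
    simp [f]
  exact this ▸ Module.FinitePresentation.fg_ker f hf

theorem exists_notMem_vanishing_of_annihilator_le [Ring.KrullDimLE 0 R] {c : R}
    (hfg : (R ∙ c).annihilator.FG) {P : Ideal R} (hP : P.IsPrime) (hc : c ∈ P)
    (hann : (R ∙ c).annihilator ≤ P) :
    ∃ r ∉ P, ∀ Q : Ideal R, Q.IsPrime →
      (c ∈ Q → ∃ s ∉ Q, s * c = 0) → ∃ s ∉ Q, s * r = 0 := by
  obtain ⟨s, hs⟩ := hfg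
  obtain ⟨e, he, heq⟩ :=
    PrimeSpectrum.isClopen_iff.mp (isClopen_zeroLocus_of_finite (s.finite_toSet.insert c))
  have notMem_iff (Q : Ideal R) (hQ : Q.IsPrime) : e ∉ Q ↔ insert c (s : Set R) ⊆ Q := by
    simpa using (congrArg (⟨Q, hQ⟩ ∈ ·) heq).symm
  have subset_P : insert c (s : Set R) ⊆ P :=
    Set.insert_subset hc fun b hb => hann (hs ▸ Ideal.subset_span hb)
  refine ⟨e, (notMem_iff P hP).2 subset_P,
    fun Q hQ hcQ => ⟨1 - e, fun h => ?_, he.one_sub_mul_self⟩⟩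
  have heQ : e ∈ Q := by
    by_contra heQ
    obtain ⟨hcQ', hsQ⟩ := Set.insert_subset_iff.mp ((notMem_iff Q hQ).1 heQ)
    obtain ⟨t, htQ, htc⟩ := hcQ hcQ'
    refine htQ (Ideal.span_le.mpr hsQ ?_)
    rw [hs, Submodule.mem_annihilator_span_singleton, smul_eq_mul, htc]
  exact hQ.ne_top ((Q.eq_top_iff_one).mpr (sub_add_cancel (1 : R) e ▸ Q.add_mem h heQ))

theorem Ideal.Pure.of_forall_exists_eq_mul {I : Ideal R} (h : ∀ x ∈ I, ∃ y ∈ I, x = x * y) :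
    I.Pure :=
  Ideal.Pure.of_inf_eq_mul I fun J _ => le_antisymm (fun x ⟨hxI, hxJ⟩ => by
    obtain ⟨y, hy, hxy⟩ := h x hxI
    rw [hxy, mul_comm x y]
    exact Ideal.mul_mem_mul hy hxJ) Ideal.mul_le_inf

theorem Ideal.exists_eq_mul_of_forall_isMaximal {I : Ideal R}
    (h : ∀ P : Ideal R, P.IsMaximal → I ≤ P → ∀ x ∈ I, ∃ s ∉ P, s * x = 0) :
    ∀ x ∈ I, ∃ y ∈ I, x = x * y := by
  intro x hx
  have htop : I ⊔ (R ∙ x).annihilator = ⊤ := by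
    by_contra hne
    obtain ⟨P, hPmax, hle⟩ := Ideal.exists_le_maximal _ hne
    obtain ⟨s, hsP, hsx⟩ := h P hPmax (le_sup_left.trans hle) x hx
    exact hsP (le_sup_right.trans hle ((Submodule.mem_annihilator_span_singleton x s).mpr hsx))
  obtain ⟨y, hy, t, ht, hyt⟩ := Submodule.mem_sup.mp ((Ideal.eq_top_iff_one _).mp htop)
  rw [Submodule.mem_annihilator_span_singleton, smul_eq_mul] at ht
  exact ⟨y, hy, by linear_combination ht - x * hyt⟩

end

/-- Let `R` be P-coherent of Krull dimension 0, `X` the set of maximal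
ideals `P` with `PR_P = 0`, and `A` the kernel of `R → ∏_{P ∈ X} R_P`. Then `A` is a pure
ideal and `X = V(A)`. -/
theorem kernel_is_pure_ideal_of_pcoherent (R : Type u) [CommRing R]
    (hcoh : ∀ r : R, Module.FinitePresentation R (Ideal.span {r} : Ideal R))
    (hdim : ∀ Q : Ideal R, Q.IsPrime → Q.IsMaximal)
    (X : Set (Ideal R))
    (hX : X = {P : Ideal R | P.IsMaximal ∧ ∀ a ∈ P, ∃ s ∉ P, s * a = 0})
    (A : Ideal R)
    (hA : ∀ r : R, r ∈ A ↔ ∀ P ∈ X, ∃ s ∉ P, s * r = 0) :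
    Module.Flat R (R ⧸ A) ∧ ∀ P : Ideal R, P.IsPrime → (P ∈ X ↔ A ≤ P) := by
  have := Ring.KrullDimLE.mk₀ hdim
  have mem_X (P : Ideal R) : P ∈ X ↔ P.IsMaximal ∧ ∀ a ∈ P, ∃ s ∉ P, s * a = 0 := by
    rw [hX, Set.mem_ofPred_eq]
  have le_of_mem : ∀ P ∈ X, A ≤ P := fun P hPX r hr => by
    obtain ⟨s, hs, hsr⟩ := (hA r).1 hr P hPX
    exact (((mem_X P).1 hPX).1.isPrime.mem_or_mem (hsr ▸ P.zero_mem)).resolve_left hs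
  have mem_of_le : ∀ P : Ideal R, P.IsPrime → A ≤ P → P ∈ X := by
    intro P hP hAP
    refine (mem_X P).2 ⟨hdim P hP, fun c hcP => ?_⟩
    by_contra! hc
    have hann : (R ∙ c).annihilator ≤ P := fun s hs => by
      by_contra hsP
      exact hc s hsP ((Submodule.mem_annihilator_span_singleton c s).mp hs)
    have : Module.FinitePresentation R (R ∙ c) := hcoh c
    obtain ⟨r, hrP, hr⟩ := exists_notMem_vanishing_of_annihilator_le
      (Submodule.fg_annihilator_span_singleton c) hP hcP hann
    exact hrP (hAP ((hA r).2 fun Q hQX =>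
      hr Q ((mem_X Q).1 hQX).1.isPrime (((mem_X Q).1 hQX).2 c)))
  exact ⟨Ideal.Pure.of_forall_exists_eq_mul (Ideal.exists_eq_mul_of_forall_isMaximal
      fun P hP hAP x hx => (hA x).1 hx P (mem_of_le P hP.isPrime hAP)),
    fun P hP => ⟨le_of_mem P, mem_of_le P hP⟩⟩
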